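/- arXiv:1404.5524 — 2 statements merged into one kernel-verified Lean document; each statement's English description precedes it below -/
import Mathlib

section
/- If x* is a steady state of the processive n-site system that is not positive (i.e., some coordinate of x* is zero), then the set Λ = { i : x*ᵢ = 0 } contains the support of at least one of the three rows of the conservation matrix 𝒜; that is, Λ contains {1, 5, 7, 9, …, 2n+3}, or {2, 6, 8, …, 2n+4}, or {3, 4, 5, …, 2n+4}. Consequently, for every x⁰ ∈ ℝ^{2n+4} with all coordinates strictly positive, the stoichiometric compatibility class (x⁰ + column space of Γ) ∩ ℝ^{2n+4}_{≥0} contains no steady state having a zero coordinate. -/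
open Matrix Finset

noncomputable section

/-- The `m`-th (1-based) standard basis vector of `ℝ^(2n+4)`. -/
def E (n : ℕ) (m : ℕ) : Fin (2*n+4) → ℝ := fun j => if (j : ℕ) + 1 = m then 1 else 0

/-- The value of a vector `x ∈ ℝ^(2n+4)` at the (1-based) math index `m`. -/
def X (n : ℕ) (x : Fin (2*n+4) → ℝ) (m : ℕ) : ℝ :=
  if h : m - 1 < 2*n+4 then x ⟨m - 1, h⟩ else 0

/-- The stoichiometric matrix `Γ` of the processive `n`-site phosphorylation network;
columns are indexed 1-based as in the paper. -/
def Gamma (n : ℕ) : Matrix (Fin (2*n+4)) (Fin (2*n+2)) ℝ :=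
  Matrix.of fun r c0 =>
    (let c := (c0 : ℕ) + 1
     if c = 1 then E n 5 - E n 1 - E n 3
     else if c ≤ n then E n (2*(c-1)+5) - E n (2*(c-1)+3)
     else if c = n+1 then E n 1 + E n 4 - E n (2*n+3)
     else if c = n+2 then E n (2*n+4) - E n 2 - E n 4
     else if c ≤ 2*n+1 then E n (2*n+4-2*(c-(n+2))) - E n (2*n+6-2*(c-(n+2)))
     else E n 2 + E n 3 - E n 6) r

/-- The mass-action reaction rate function `R : ℝ^(2n+4) → ℝ^(2n+2)` of the processive
`n`-site phosphorylation network (coordinates indexed 1-based). -/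
def Rvec (n : ℕ) (k l : ℕ → ℝ) (x : Fin (2*n+4) → ℝ) : Fin (2*n+2) → ℝ := fun a0 =>
  let a := (a0 : ℕ) + 1
  if a = 1 then k 1 * X n x 1 * X n x 3 - k 2 * X n x 5
  else if a ≤ n then
    k (2*(a-1)+1) * X n x (2*(a-1)+3) - k (2*(a-1)+2) * X n x (2*(a-1)+5)
  else if a = n+1 then k (2*n+1) * X n x (2*n+3)
  else if a = n+2 then l (2*n+1) * X n x 2 * X n x 4 - l (2*n) * X n x (2*n+4)
  else if a ≤ 2*n+1 then
    l (2*(n-(a-(n+2)))+1) * X n x (2*(n-(a-(n+2)))+6)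
      - l (2*(n-(a-(n+2)))) * X n x (2*(n-(a-(n+2)))+4)
  else l 1 * X n x 6

/-- The conservation matrix `𝒜` of the processive `n`-site network: row 1 has ones in
columns 1, 5, 7, …, 2n+3; row 2 has ones in columns 2, 6, 8, …, 2n+4; row 3 has ones in
columns 3, 4, …, 2n+4 (columns indexed 1-based). -/
def Amat (n : ℕ) : Matrix (Fin 3) (Fin (2*n+4)) ℝ :=
  Matrix.of fun r c =>
    let m := (c : ℕ) + 1
    if (r : ℕ) = 0 then (if m = 1 ∨ (m % 2 = 1 ∧ 5 ≤ m) then (1:ℝ) else 0)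
    else if (r : ℕ) = 1 then (if m = 2 ∨ (m % 2 = 0 ∧ 6 ≤ m) then 1 else 0)
    else (if 3 ≤ m then 1 else 0)

/-!
Every species other than `x₁, …, x₄` is an intermediate complex, produced by one reaction and
consumed by the next, so at a steady state all `2n+2` reaction fluxes share one value `ρ ≥ 0`.
Along each of the two arms of the cycle the fluxes read `aᵢ yᵢ - bᵢ yᵢ₊₁ = ρ`, ending with
`aₙ yₙ = ρ`, where `y₀` is `x₁x₃` resp. `x₂x₄` and the other `yᵢ` are the intermediates.
If `ρ > 0` every `yᵢ` is positive, so the steady state is positive. If `ρ = 0` the `yᵢ` vanish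
one after the other from `yₙ` down to `y₀`; this kills every intermediate, one factor of `x₁x₃`
and one of `x₂x₄`, and whichever factors vanish, the zero set contains the support of a row
of `𝒜`. Since the rows of `𝒜` are conservation laws (`𝒜 Γ = 0`), that row sum is the same on
the whole compatibility class, where it is positive at the positive point `x⁰`.
-/

theorem Fin.apply_eq_apply_zero_of_castSucc_eq_succ {m : ℕ} {α : Type*} {f : Fin (m + 1) → α}
    (h : ∀ i : Fin m, f i.castSucc = f i.succ) (i : Fin (m + 1)) : f i = f 0 := by
  induction i using Fin.induction with
  | zero => rfl
  | succ i ih => rw [← h i, ih]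

theorem Matrix.mulVec_eq_of_mul_eq_zero_of_sub_mem_range {ι σ τ R : Type*} [Fintype σ]
    [Fintype τ] [CommRing R] {A : Matrix ι σ R} {Γ : Matrix σ τ R} (h : A * Γ = 0)
    {x y : σ → R} (hxy : x - y ∈ LinearMap.range Γ.mulVecLin) : A *ᵥ x = A *ᵥ y := by
  obtain ⟨u, hu⟩ := hxy
  rw [← sub_eq_zero, ← mulVec_sub, ← hu, mulVecLin_apply, mulVec_mulVec, h, zero_mulVec]

theorem Matrix.dotProduct_pos_of_nonneg_of_ne_zero {ι R : Type*} [Fintype ι] [Semiring R]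
    [PartialOrder R] [IsStrictOrderedRing R] {v w : ι → R}
    (hv : ∀ i, 0 ≤ v i) (hv0 : v ≠ 0) (hw : ∀ i, 0 < w i) : 0 < v ⬝ᵥ w := by
  obtain ⟨i, hi⟩ := Function.ne_iff.mp hv0
  exact Finset.sum_pos' (fun j _ => mul_nonneg (hv j) (hw j).le)
    ⟨i, Finset.mem_univ i, mul_pos ((hv i).lt_of_ne' hi) (hw i)⟩

theorem Matrix.dotProduct_eq_zero_of_eq_zero_on_support {ι R : Type*} [Fintype ι]
    [NonUnitalNonAssocSemiring R] {v w : ι → R}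
    (h : ∀ i, v i ≠ 0 → w i = 0) : v ⬝ᵥ w = 0 :=
  Finset.sum_eq_zero fun i _ => by
    by_cases hi : v i = 0
    · rw [hi, zero_mul]
    · rw [h i hi, mul_zero]

/-- A linear chain of reversible reactions `y₀ ⇌ y₁ ⇌ ⋯ ⇌ yₙ → ∅` (forward rate `aᵢ yᵢ`,
backward rate `bᵢ yᵢ₊₁`) in which every reaction carries the same net flux `ρ`. -/
def IsFluxChain (n : ℕ) (a b y : ℕ → ℝ) (ρ : ℝ) : Prop :=
  (∀ i < n, a i * y i - b i * y (i + 1) = ρ) ∧ a n * y n = ρ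

namespace IsFluxChain

variable {n : ℕ} {a b y : ℕ → ℝ} {ρ : ℝ}

theorem pos (h : IsFluxChain n a b y ρ) (ha : ∀ i ≤ n, 0 < a i) (hb : ∀ i < n, 0 ≤ b i)
    (hy : ∀ i, 0 ≤ y i) (hρ : 0 < ρ) : ∀ i ≤ n, 0 < y i := by
  intro i hi
  refine pos_of_mul_pos_right ?_ (ha i hi).le
  rcases hi.lt_or_eq with hi | rfl
  · linarith [h.1 i hi, mul_nonneg (hb i hi) (hy (i + 1))]
  · exact h.2 ▸ hρ

theorem eq_zero (h : IsFluxChain n a b y ρ) (ha : ∀ i ≤ n, a i ≠ 0) (hρ : ρ = 0) :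
    ∀ i ≤ n, y i = 0 := by
  subst hρ
  intro i hi
  induction hi using Nat.decreasingInduction with
  | self => exact (mul_eq_zero.mp h.2).resolve_left (ha n le_rfl)
  | of_succ i hi ih =>
    have hstep := h.1 i hi
    rw [ih, mul_zero, sub_zero] at hstep
    exact (mul_eq_zero.mp hstep).resolve_left (ha i hi.le)

end IsFluxChain

variable {n : ℕ} {k l : ℕ → ℝ} {x : Fin (2*n+4) → ℝ}

theorem X_succ (x : Fin (2*n+4) → ℝ) (i : Fin (2*n+4)) : X n x ((i : ℕ) + 1) = x i := by
  simp [X]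

theorem X_nonneg (hx : ∀ i, 0 ≤ x i) (m : ℕ) : 0 ≤ X n x m := by
  unfold X
  split_ifs
  exacts [hx _, le_rfl]

theorem E_eq_single {m : ℕ} (hm : 1 ≤ m) (h : m - 1 < 2*n+4) :
    E n m = Pi.single ⟨m - 1, h⟩ 1 := by
  funext j
  simp only [E, Pi.single_apply, Fin.ext_iff]
  congr 1
  exact propext (by omega)

theorem dotProduct_E (v : Fin (2*n+4) → ℝ) {m : ℕ} (hm : 1 ≤ m) : v ⬝ᵥ E n m = X n v m := by
  by_cases h : m - 1 < 2*n+4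
  · rw [E_eq_single hm h, dotProduct_single_one, X, dif_pos h]
  · have hE : E n m = 0 := funext fun j => if_neg (by omega)
    rw [hE, dotProduct_zero, X, dif_neg h]

theorem X_Amat_zero {m : ℕ} (h1 : 1 ≤ m) (h2 : m ≤ 2*n+4) :
    X n (Amat n 0) m = if m = 1 ∨ (m % 2 = 1 ∧ 5 ≤ m) then 1 else 0 := by
  simp only [X, Amat, Matrix.of_apply, dif_pos (show m - 1 < 2*n+4 by omega),
    Nat.sub_add_cancel h1]
  rfl

theorem X_Amat_one {m : ℕ} (h1 : 1 ≤ m) (h2 : m ≤ 2*n+4) :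
    X n (Amat n 1) m = if m = 2 ∨ (m % 2 = 0 ∧ 6 ≤ m) then 1 else 0 := by
  simp only [X, Amat, Matrix.of_apply, dif_pos (show m - 1 < 2*n+4 by omega),
    Nat.sub_add_cancel h1]
  rfl

theorem X_Amat_two {m : ℕ} (h1 : 1 ≤ m) (h2 : m ≤ 2*n+4) :
    X n (Amat n 2) m = if 3 ≤ m then 1 else 0 := by
  simp only [X, Amat, Matrix.of_apply, dif_pos (show m - 1 < 2*n+4 by omega),
    Nat.sub_add_cancel h1]
  rfl

theorem Amat_mul_Gamma (hn : 1 ≤ n) : Amat n * Gamma n = 0 := by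
  ext r c
  rw [Matrix.mul_apply', Matrix.zero_apply]
  have hc := c.isLt
  simp only [Gamma, Matrix.of_apply]
  split_ifs <;>
    simp (disch := omega) only [dotProduct_sub, dotProduct_add, dotProduct_E] <;>
    fin_cases r <;>
    simp (disch := omega) only [Fin.zero_eta, Fin.mk_one, Fin.reduceFinMk, X_Amat_zero,
      X_Amat_one, X_Amat_two] <;>
    split_ifs <;> first | omega | simp_all

theorem Amat_nonneg (r : Fin 3) (i : Fin (2*n+4)) : 0 ≤ Amat n r i := by
  simp only [Amat, Matrix.of_apply]
  split_ifs <;> norm_num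

theorem Amat_row_ne_zero (r : Fin 3) : Amat n r ≠ 0 := by
  refine Function.ne_iff.mpr ⟨⟨r, r.isLt.trans (by omega)⟩, ?_⟩
  fin_cases r <;> simp [Amat]

theorem Amat_zero_ne_zero {i : Fin (2*n+4)} (h : Amat n 0 i ≠ 0) :
    (i : ℕ) + 1 = 1 ∨ 5 ≤ (i : ℕ) + 1 := by
  rw [← X_succ (Amat n 0) i, X_Amat_zero (by omega) (by omega)] at h
  split_ifs at h
  · omega
  · exact absurd rfl h

theorem Amat_one_ne_zero {i : Fin (2*n+4)} (h : Amat n 1 i ≠ 0) :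
    (i : ℕ) + 1 = 2 ∨ 5 ≤ (i : ℕ) + 1 := by
  rw [← X_succ (Amat n 1) i, X_Amat_one (by omega) (by omega)] at h
  split_ifs at h
  · omega
  · exact absurd rfl h

theorem Amat_two_ne_zero {i : Fin (2*n+4)} (h : Amat n 2 i ≠ 0) :
    (i : ℕ) + 1 = 3 ∨ (i : ℕ) + 1 = 4 ∨ 5 ≤ (i : ℕ) + 1 := by
  rw [← X_succ (Amat n 2) i, X_Amat_two (by omega) (by omega)] at h
  split_ifs at h
  · omega
  · exact absurd rfl h

/-- The witnesses are the intermediate species `2c+5` (for `c < n`), `4` and `4n+6-2c`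
(for `c > n`), in the paper's 1-based numbering. -/
theorem exists_row_Gamma_eq_single_sub_single (hn : 1 ≤ n) (c : Fin (2*n+1)) :
    ∃ s, Gamma n s = Pi.single c.castSucc 1 - Pi.single c.succ 1 := by
  obtain ⟨c, hc⟩ := c
  obtain h | h | h := lt_trichotomy c n
  on_goal 1 => refine ⟨⟨2*c+4, by omega⟩, ?_⟩
  on_goal 2 => refine ⟨⟨3, by omega⟩, ?_⟩
  on_goal 3 => refine ⟨⟨4*n+5-2*c, by omega⟩, ?_⟩
  all_goals
    funext j
    simp only [Gamma, Matrix.of_apply, Pi.single_apply, Pi.sub_apply, Fin.ext_iff,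
      Fin.val_castSucc, Fin.val_succ]
    split_ifs <;> simp only [E, Pi.sub_apply, Pi.add_apply] <;> split_ifs <;>
      first | omega | norm_num

theorem eq_of_Gamma_mulVec_eq_zero (hn : 1 ≤ n) {f : Fin (2*n+2) → ℝ} (h : Gamma n *ᵥ f = 0)
    (c d : Fin (2*n+2)) : f c = f d := by
  have hstep (i : Fin (2*n+1)) : f i.castSucc = f i.succ := by
    obtain ⟨s, hs⟩ := exists_row_Gamma_eq_single_sub_single hn i
    have := congrFun h s
    rwa [Matrix.mulVec, hs, sub_dotProduct, single_one_dotProduct, single_one_dotProduct,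
      Pi.zero_apply, sub_eq_zero] at this
  rw [Fin.apply_eq_apply_zero_of_castSucc_eq_succ hstep c,
    Fin.apply_eq_apply_zero_of_castSucc_eq_succ hstep d]

/- The reactant monomials along the two arms of the reaction cycle: `x₁x₃, x₅, …, x₂ₙ₊₃`
for the `k`-reactions and `x₂x₄, x₂ₙ₊₄, …, x₈, x₆` for the `ℓ`-reactions. -/
def kChain (n : ℕ) (x : Fin (2*n+4) → ℝ) : ℕ → ℝ
  | 0 => X n x 1 * X n x 3
  | i + 1 => X n x (2*i+5)

def lChain (n : ℕ) (x : Fin (2*n+4) → ℝ) : ℕ → ℝ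
  | 0 => X n x 2 * X n x 4
  | i + 1 => X n x (2*(n-i)+4)

theorem kChain_nonneg (hx : ∀ i, 0 ≤ x i) : ∀ i, 0 ≤ kChain n x i
  | 0 => mul_nonneg (X_nonneg hx 1) (X_nonneg hx 3)
  | _ + 1 => X_nonneg hx _

theorem lChain_nonneg (hx : ∀ i, 0 ≤ x i) : ∀ i, 0 ≤ lChain n x i
  | 0 => mul_nonneg (X_nonneg hx 2) (X_nonneg hx 4)
  | _ + 1 => X_nonneg hx _

theorem exists_chain_eq_X {m : ℕ} (h5 : 5 ≤ m) (hm : m ≤ 2*n+4) :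
    ∃ j ≤ n, kChain n x j = X n x m ∨ lChain n x j = X n x m := by
  obtain ⟨t, rfl | rfl⟩ := Nat.even_or_odd' m
  · refine ⟨n + 3 - t, by omega, Or.inr ?_⟩
    rw [show n + 3 - t = (n + 2 - t) + 1 by omega, lChain]
    congr 1
    omega
  · refine ⟨t - 1, by omega, Or.inl ?_⟩
    rw [show t - 1 = (t - 2) + 1 by omega, kChain]
    congr 1
    omega

theorem Rvec_eq_kChain {i : ℕ} (hi : i < n) :
    Rvec n k l x ⟨i, by omega⟩ = k (2*i+1) * kChain n x i - k (2*i+2) * kChain n x (i+1) := by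
  rcases i with _ | i <;> simp only [Rvec, kChain, Nat.add_sub_cancel] <;> split_ifs <;>
    first | omega | ring1 | ring_nf

theorem Rvec_eq_kChain_last (hn : 1 ≤ n) :
    Rvec n k l x ⟨n, by omega⟩ = k (2*n+1) * kChain n x n := by
  obtain ⟨m, rfl⟩ : ∃ m, n = m + 1 := ⟨n - 1, by omega⟩
  simp only [Rvec, kChain]
  split_ifs <;> first | omega | ring_nf

theorem Rvec_eq_lChain {i : ℕ} (hi : i < n) :
    Rvec n k l x ⟨n+1+i, by omega⟩
      = l (2*(n-i)+1) * lChain n x i - l (2*(n-i)) * lChain n x (i+1) := by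
  rcases i with _ | i
  · simp only [Rvec, lChain, Nat.sub_zero]
    split_ifs <;> first | omega | ring1
  · simp only [Rvec, lChain, show n + 1 + (i + 1) + 1 - (n + 2) = i + 1 by omega,
      show 2 * (n - i) + 4 = 2 * (n - (i + 1)) + 6 by omega]
    split_ifs <;> first | omega | rfl

theorem Rvec_eq_lChain_last (hn : 1 ≤ n) :
    Rvec n k l x ⟨2*n+1, by omega⟩ = l 1 * lChain n x n := by
  obtain ⟨m, rfl⟩ : ∃ m, n = m + 1 := ⟨n - 1, by omega⟩
  simp only [Rvec, lChain, show m + 1 - m = 1 by omega]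
  split_ifs <;> first | omega | rfl

theorem isFluxChain_kChain (hn : 1 ≤ n) (hss : Gamma n *ᵥ Rvec n k l x = 0) :
    IsFluxChain n (fun i => k (2*i+1)) (fun i => k (2*i+2)) (kChain n x)
      (Rvec n k l x ⟨n, by omega⟩) :=
  ⟨fun _ hi => (Rvec_eq_kChain hi).symm.trans (eq_of_Gamma_mulVec_eq_zero hn hss _ _),
    (Rvec_eq_kChain_last hn).symm⟩

theorem isFluxChain_lChain (hn : 1 ≤ n) (hss : Gamma n *ᵥ Rvec n k l x = 0) :
    IsFluxChain n (fun i => l (2*(n-i)+1)) (fun i => l (2*(n-i))) (lChain n x)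
      (Rvec n k l x ⟨n, by omega⟩) := by
  refine ⟨fun _ hi => (Rvec_eq_lChain hi).symm.trans (eq_of_Gamma_mulVec_eq_zero hn hss _ _), ?_⟩
  show l (2*(n-n)+1) * lChain n x n = _
  rw [Nat.sub_self, ← Rvec_eq_lChain_last hn]
  exact eq_of_Gamma_mulVec_eq_zero hn hss _ _

theorem ne_zero_of_flux_pos (hn : 1 ≤ n) (hk : ∀ i, 1 ≤ i → i ≤ 2*n+1 → 0 < k i)
    (hl : ∀ i, 1 ≤ i → i ≤ 2*n+1 → 0 < l i) (hx : ∀ i, 0 ≤ x i)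
    (hss : Gamma n *ᵥ Rvec n k l x = 0) (hρ : 0 < Rvec n k l x ⟨n, by omega⟩)
    (i : Fin (2*n+4)) : x i ≠ 0 := by
  have hK := (isFluxChain_kChain hn hss).pos (fun i hi => hk _ (by omega) (by omega))
    (fun i hi => (hk _ (by omega) (by omega)).le) (kChain_nonneg hx) hρ
  have hL := (isFluxChain_lChain hn hss).pos (fun i hi => hl _ (by omega) (by omega))
    (fun i hi => (hl _ (by omega) (by omega)).le) (lChain_nonneg hx) hρ
  have h13 : X n x 1 * X n x 3 ≠ 0 := (hK 0 (Nat.zero_le n)).ne'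
  have h24 : X n x 2 * X n x 4 ≠ 0 := (hL 0 (Nat.zero_le n)).ne'
  rw [← X_succ x i]
  by_cases h5 : 5 ≤ (i : ℕ) + 1
  · obtain ⟨j, hj, h | h⟩ := exists_chain_eq_X (x := x) h5 (by omega)
    · exact h ▸ (hK j hj).ne'
    · exact h ▸ (hL j hj).ne'
  · obtain h | h | h | h :
        (i : ℕ) + 1 = 1 ∨ (i : ℕ) + 1 = 2 ∨ (i : ℕ) + 1 = 3 ∨ (i : ℕ) + 1 = 4 := by
      omega
    all_goals rw [h]
    exacts [left_ne_zero_of_mul h13, left_ne_zero_of_mul h24, right_ne_zero_of_mul h13,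
      right_ne_zero_of_mul h24]

theorem X_eq_zero_of_flux_eq_zero (hn : 1 ≤ n) (hk : ∀ i, 1 ≤ i → i ≤ 2*n+1 → 0 < k i)
    (hl : ∀ i, 1 ≤ i → i ≤ 2*n+1 → 0 < l i) (hss : Gamma n *ᵥ Rvec n k l x = 0)
    (hρ : Rvec n k l x ⟨n, by omega⟩ = 0) :
    X n x 1 * X n x 3 = 0 ∧ X n x 2 * X n x 4 = 0 ∧
      ∀ m, 5 ≤ m → m ≤ 2*n+4 → X n x m = 0 := by
  have hK := (isFluxChain_kChain hn hss).eq_zero (fun i hi => (hk _ (by omega) (by omega)).ne') hρ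
  have hL := (isFluxChain_lChain hn hss).eq_zero (fun i hi => (hl _ (by omega) (by omega)).ne') hρ
  refine ⟨hK 0 (Nat.zero_le n), hL 0 (Nat.zero_le n), fun m h5 hm => ?_⟩
  obtain ⟨j, hj, h | h⟩ := exists_chain_eq_X (x := x) h5 hm
  exacts [h ▸ hK j hj, h ▸ hL j hj]

theorem steadyState_vanishes_on_Amat_row (hn : 1 ≤ n) (hk : ∀ i, 1 ≤ i → i ≤ 2*n+1 → 0 < k i)
    (hl : ∀ i, 1 ≤ i → i ≤ 2*n+1 → 0 < l i) (hx : ∀ i, 0 ≤ x i)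
    (hss : Gamma n *ᵥ Rvec n k l x = 0) (hzero : ∃ i, x i = 0) :
    (∀ i, Amat n 0 i ≠ 0 → x i = 0) ∨ (∀ i, Amat n 1 i ≠ 0 → x i = 0) ∨
      (∀ i, Amat n 2 i ≠ 0 → x i = 0) := by
  obtain ⟨i₀, hi₀⟩ := hzero
  have hρ : 0 ≤ Rvec n k l x ⟨n, by omega⟩ :=
    Rvec_eq_kChain_last hn ▸ mul_nonneg (hk _ (by omega) le_rfl).le (kChain_nonneg hx n)
  obtain hρ | hρ := hρ.lt_or_eq
  · exact absurd hi₀ (ne_zero_of_flux_pos hn hk hl hx hss hρ i₀)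
  obtain ⟨h13, h24, hm⟩ := X_eq_zero_of_flux_eq_zero hn hk hl hss hρ.symm
  have hx_eq (i : Fin (2*n+4)) {m : ℕ} (hi : (i : ℕ) + 1 = m) (hm : X n x m = 0) : x i = 0 := by
    rwa [← X_succ x i, hi]
  have h5 (i : Fin (2*n+4)) (hi : 5 ≤ (i : ℕ) + 1) : x i = 0 := hx_eq i rfl (hm _ hi (by omega))
  obtain h1 | h3 := mul_eq_zero.mp h13
  · refine Or.inl fun i hi => ?_
    obtain hi | hi := Amat_zero_ne_zero hi
    exacts [hx_eq i hi h1, h5 i hi]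
  obtain h2 | h4 := mul_eq_zero.mp h24
  · refine Or.inr (Or.inl fun i hi => ?_)
    obtain hi | hi := Amat_one_ne_zero hi
    exacts [hx_eq i hi h2, h5 i hi]
  · refine Or.inr (Or.inr fun i hi => ?_)
    obtain hi | hi | hi := Amat_two_ne_zero hi
    exacts [hx_eq i hi h3, hx_eq i hi h4, h5 i hi]

/-- A steady state of the processive `n`-site system with a zero coordinate has zero set
containing the support of a row of the conservation matrix `𝒜`; consequently, no
stoichiometric compatibility class of a positive point contains a steady state with a
zero coordinate. -/
theorem no_boundary_steady_states (n : ℕ) (hn : 1 ≤ n) (k l : ℕ → ℝ)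
    (hk : ∀ i, 1 ≤ i → i ≤ 2*n+1 → 0 < k i)
    (hl : ∀ i, 1 ≤ i → i ≤ 2*n+1 → 0 < l i) :
    (∀ x : Fin (2*n+4) → ℝ, (∀ i, 0 ≤ x i) →
      (Gamma n).mulVec (Rvec n k l x) = 0 → (∃ i, x i = 0) →
      ((∀ i, Amat n 0 i ≠ 0 → x i = 0) ∨ (∀ i, Amat n 1 i ≠ 0 → x i = 0) ∨
        (∀ i, Amat n 2 i ≠ 0 → x i = 0))) ∧
    (∀ x0 : Fin (2*n+4) → ℝ, (∀ i, 0 < x0 i) →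
      ∀ x : Fin (2*n+4) → ℝ, (∀ i, 0 ≤ x i) →
        x - x0 ∈ LinearMap.range (Matrix.mulVecLin (Gamma n)) →
        (Gamma n).mulVec (Rvec n k l x) = 0 → ∀ i, x i ≠ 0) := by
  refine ⟨fun x hx hss hzero => steadyState_vanishes_on_Amat_row hn hk hl hx hss hzero, ?_⟩
  intro x0 hx0 x hx hrange hss i hi
  obtain ⟨r, hr⟩ : ∃ r, ∀ j, Amat n r j ≠ 0 → x j = 0 := by
    obtain h | h | h := steadyState_vanishes_on_Amat_row hn hk hl hx hss ⟨i, hi⟩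
    exacts [⟨0, h⟩, ⟨1, h⟩, ⟨2, h⟩]
  have hconserved : Amat n r ⬝ᵥ x = Amat n r ⬝ᵥ x0 :=
    congrFun (Matrix.mulVec_eq_of_mul_eq_zero_of_sub_mem_range (Amat_mul_Gamma hn) hrange) r
  have hpos :=
    Matrix.dotProduct_pos_of_nonneg_of_ne_zero (Amat_nonneg r) (Amat_row_ne_zero r) hx0
  rw [← hconserved, Matrix.dotProduct_eq_zero_of_eq_zero_on_support hr] at hpos
  exact lt_irrefl 0 hpos
end
end

section
/- Let x ∈ ℝ^{2n+4} have all coordinates strictly positive. Then x is a steady state (Γ·R(x) = 0) if and only if there exists a real number α > 0 such that Ψ(x) = α·ρ. -/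
open Matrix Finset

noncomputable section

/-- The label of the edge `a → b` (nodes 1-based in `{1, …, 2n+2}`) in the labeled digraph
underlying the translated processive network; `0` if there is no such edge. -/
def lab (n : ℕ) (k l : ℕ → ℝ) (a b : ℕ) : ℝ :=
  if 1 ≤ a ∧ a ≤ n ∧ b = a+1 then k (2*a-1)
  else if 1 ≤ b ∧ b ≤ n ∧ a = b+1 then k (2*b)
  else if a = n+1 ∧ b = n+2 then k (2*n+1)
  else if n+2 ≤ a ∧ a ≤ 2*n+1 ∧ b = a+1 then l (2*(n+1-(a-(n+1)))+1)
  else if n+3 ≤ a ∧ a ≤ 2*n+2 ∧ b+1 = a then l (2*(n+1-(a-(n+2))))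
  else if a = 2*n+2 ∧ b = 1 then l 1
  else 0

/-- The matrix `Ã_κᵗ` of the translated processive network: for `j ≠ i` the `(j,i)` entry
is the label of the edge `i → j` (or `0`), and the `(i,i)` entry is minus the sum of the
labels of all edges leaving node `i`. -/
def Atilde (n : ℕ) (k l : ℕ → ℝ) : Matrix (Fin (2*n+2)) (Fin (2*n+2)) ℝ :=
  Matrix.of fun j i =>
    if j = i then -(∑ b ∈ Finset.range (2*n+3), lab n k l ((i : ℕ)+1) b)
    else lab n k l ((i : ℕ)+1) ((j : ℕ)+1)

/-- The monomial map `Ψ : ℝ^(2n+4) → ℝ^(2n+2)` of the translated processive network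
(coordinates indexed 1-based). -/
def Psi (n : ℕ) (x : Fin (2*n+4) → ℝ) : Fin (2*n+2) → ℝ := fun a0 =>
  let a := (a0 : ℕ) + 1
  if a = 1 then X n x 1 * X n x 3
  else if a ≤ n+1 then X n x (2*a+1)
  else if a = n+2 then X n x 2 * X n x 4
  else X n x (2*n+6-2*(a-(n+2)))

/-!
Both sides say that `Ψ(x)` lies in `ker Ã_κᵗ`. Every species is produced by exactly one
reaction and consumed by exactly one other, and these pairs link the reactions `1, …, 2n+2` into
a chain, so `Γ·R(x) = 0` iff all reaction rates are equal. The rate `R_j(x)` is the flux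
`f_j Ψ_j(x) - b_j Ψ_{j+1}(x)` along the `j`-th edge of the cycle `1 → ⋯ → 2n+2 → 1` underlying
`Ã_κᵗ` (forward label `f_j`, reverse label `b_j`), and `Ã_κᵗ v = 0` iff all fluxes of `v` agree.

The kernel is a line. The edges `n+1 → n+2` and `2n+2 → 1` have no reverse, so the common flux
of a kernel vector `v` is `f_{n+1} v_{n+1}`; if `v_{n+1} = 0` it vanishes, and then descending
from node `2n+2` gives `v = 0`. Hence `Ψ(x) = α ρ` with `α = Ψ_{n+1}(x) / ρ_{n+1} > 0`.
-/

/-- `entry v m` is the `m`-th coordinate of `v`, counted from `1` as in `X`; it is `0` for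
`m > N`, while `entry v 0 = entry v 1` because of truncated subtraction. -/
def entry {N : ℕ} (v : Fin N → ℝ) (m : ℕ) : ℝ :=
  if h : m - 1 < N then v ⟨m - 1, h⟩ else 0

lemma entry_succ {N : ℕ} (v : Fin N → ℝ) (i : Fin N) : entry v (i + 1) = v i := by
  simp [entry]

lemma entry_of_lt {N : ℕ} (v : Fin N → ℝ) {m : ℕ} (h : N < m) : entry v m = 0 :=
  dif_neg (by omega)

lemma entry_pos {N : ℕ} {v : Fin N → ℝ} (hv : ∀ i, 0 < v i) {m : ℕ} (h : 1 ≤ m) (h' : m ≤ N) :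
    0 < entry v m := by
  rw [entry, dif_pos (by omega)]
  exact hv _

lemma eq_zero_of_entry_eq_zero {N : ℕ} {v : Fin N → ℝ}
    (h : ∀ m, 1 ≤ m → m ≤ N → entry v m = 0) : v = 0 := by
  funext i
  rw [← entry_succ v i]
  exact h _ (by omega) i.isLt

lemma sum_ite_mul_eq_entry {N : ℕ} (v : Fin N → ℝ) (c : ℝ) {p : ℕ} (hp : 1 ≤ p) :
    ∑ i : Fin N, (if (i : ℕ) + 1 = p then c else 0) * v i = c * entry v p := by
  by_cases hpN : p ≤ N
  · rw [Fintype.sum_eq_single ⟨p - 1, by omega⟩ fun i hi => by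
      rw [if_neg fun h => hi (Fin.ext (by simp; omega)), zero_mul]]
    simp [entry, show p - 1 < N by omega, show p - 1 + 1 = p by omega]
  · rw [entry_of_lt v (by omega), mul_zero]
    exact sum_eq_zero fun i _ => by rw [if_neg (by omega), zero_mul]

lemma eq_one_of_eq_succ {α : Type*} {f : ℕ → α} {N : ℕ}
    (h : ∀ p, 1 ≤ p → p < N → f p = f (p + 1)) {j : ℕ} (hj : 1 ≤ j) (hjN : j ≤ N) :
    f j = f 1 := by
  induction j, hj using Nat.le_induction with
  | base => rfl
  | succ p hp ih => rw [← h p hp (by omega), ih (by omega)]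

section ReactionCycle

variable (n : ℕ) (k l : ℕ → ℝ)

def cycSucc (j : ℕ) : ℕ := if j = 2*n+2 then 1 else j + 1

def cycPred (j : ℕ) : ℕ := if j = 1 then 2*n+2 else j - 1

lemma cycPred_add_one {p : ℕ} (hp : 1 ≤ p) : cycPred n (p + 1) = p := by
  unfold cycPred; split_ifs <;> omega

/-- The label of the edge `j → cycSucc j` of the cycle `1 → 2 → ⋯ → 2n+2 → 1`. -/
def fwdLabel (j : ℕ) : ℝ := if j ≤ n + 1 then k (2*j - 1) else l (2*(2*n+2-j) + 1)

/-- The label of the reverse edge `cycSucc j → j`; there is none for `j = n+1` and `j = 2n+2`. -/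
def bwdLabel (j : ℕ) : ℝ :=
  if 1 ≤ j ∧ j ≤ n then k (2*j) else if n + 2 ≤ j ∧ j ≤ 2*n+1 then l (2*(2*n+2-j)) else 0

lemma bwdLabel_n_add_one : bwdLabel n k l (n + 1) = 0 := by
  unfold bwdLabel; rw [if_neg (by omega), if_neg (by omega)]

lemma bwdLabel_two_mul_add_two : bwdLabel n k l (2*n+2) = 0 := by
  unfold bwdLabel; rw [if_neg (by omega), if_neg (by omega)]

lemma fwdLabel_pos (hk : ∀ i, 1 ≤ i → i ≤ 2*n+1 → 0 < k i)
    (hl : ∀ i, 1 ≤ i → i ≤ 2*n+1 → 0 < l i) {j : ℕ} (hj : 1 ≤ j) (hj' : j ≤ 2*n+2) :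
    0 < fwdLabel n k l j := by
  unfold fwdLabel; split_ifs
  exacts [hk _ (by omega) (by omega), hl _ (by omega) (by omega)]

def flux (v : Fin (2*n+2) → ℝ) (j : ℕ) : ℝ :=
  fwdLabel n k l j * entry v j - bwdLabel n k l j * entry v (cycSucc n j)

lemma lab_eq (hn : 1 ≤ n) {a : ℕ} (b : ℕ) (ha : 1 ≤ a) (ha' : a ≤ 2*n+2) :
    lab n k l a b = (if b = cycSucc n a then fwdLabel n k l a else 0)
      + (if a = b + 1 then bwdLabel n k l b else 0) := by
  unfold lab fwdLabel bwdLabel cycSucc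
  split_ifs <;> (try simp only [add_zero, zero_add]) <;> first | omega | rfl | (congr 1; omega)

lemma lab_self (m : ℕ) : lab n k l m m = 0 := by
  unfold lab; split_ifs <;> first | rfl | omega

lemma sum_lab_eq (hn : 1 ≤ n) {m : ℕ} (hm : 1 ≤ m) (hm' : m ≤ 2*n+2) :
    ∑ b ∈ range (2*n+3), lab n k l m b = fwdLabel n k l m + bwdLabel n k l (cycPred n m) := by
  have h : ∀ b, lab n k l m b = (if b = cycSucc n m then fwdLabel n k l m else 0)
      + (if b = m - 1 then bwdLabel n k l (cycPred n m) else 0) := fun b => by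
    rw [lab_eq n k l hn b hm hm']
    unfold cycPred bwdLabel
    split_ifs <;> first | omega | rfl | (congr 2; omega)
  simp only [h, sum_add_distrib, sum_ite_eq', mem_range]
  rw [if_pos (by unfold cycSucc; split_ifs <;> omega), if_pos (by omega)]

lemma sum_lab_mul_eq (hn : 1 ≤ n) {m : ℕ} (hm : 1 ≤ m) (hm' : m ≤ 2*n+2)
    (v : Fin (2*n+2) → ℝ) :
    ∑ i : Fin (2*n+2), lab n k l (i + 1) m * v i
      = fwdLabel n k l (cycPred n m) * entry v (cycPred n m)
        + bwdLabel n k l m * entry v (cycSucc n m) := by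
  have h : ∀ i : Fin (2*n+2), lab n k l (i + 1) m * v i
      = (if (i : ℕ) + 1 = cycPred n m then fwdLabel n k l (cycPred n m) else 0) * v i
        + (if (i : ℕ) + 1 = cycSucc n m then bwdLabel n k l m else 0) * v i := fun i => by
    have := i.isLt
    rw [lab_eq n k l hn m (by omega) (by omega), add_mul]
    unfold cycSucc cycPred bwdLabel
    congr 2 <;> split_ifs <;> first | omega | rfl | congr 1
  rw [Fintype.sum_congr _ _ h, sum_add_distrib,
    sum_ite_mul_eq_entry _ _ (by unfold cycPred; split <;> omega),
    sum_ite_mul_eq_entry _ _ (by unfold cycSucc; split_ifs <;> omega)]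

lemma Atilde_mulVec_apply (hn : 1 ≤ n) (v : Fin (2*n+2) → ℝ) (j : Fin (2*n+2)) :
    (Atilde n k l *ᵥ v) j = flux n k l v (cycPred n (j + 1)) - flux n k l v (j + 1) := by
  have := j.isLt
  have hA : ∀ i, Atilde n k l j i = lab n k l (i + 1) (j + 1)
      - if j = i then fwdLabel n k l (j + 1) + bwdLabel n k l (cycPred n (j + 1)) else 0 :=
    fun i => by
      rw [Atilde, of_apply, ← sum_lab_eq n k l hn (m := j + 1) (by omega) (by omega)]
      split_ifs with h
      · rw [← h, lab_self, zero_sub]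
      · rw [sub_zero]
  simp only [mulVec, dotProduct, hA, sub_mul, sum_sub_distrib, ite_mul, zero_mul, sum_ite_eq,
    mem_univ, if_true, sum_lab_mul_eq n k l hn (by omega : 1 ≤ (j : ℕ) + 1) (by omega), flux]
  have : cycSucc n (cycPred n (j + 1)) = j + 1 := by
    unfold cycSucc cycPred; split_ifs <;> omega
  rw [this, ← entry_succ v j]
  ring

lemma Atilde_mulVec_eq_zero_iff (hn : 1 ≤ n) (v : Fin (2*n+2) → ℝ) :
    Atilde n k l *ᵥ v = 0 ↔ ∀ j, 1 ≤ j → j ≤ 2*n+2 → flux n k l v j = flux n k l v 1 := by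
  constructor
  · intro h j hj hj'
    refine eq_one_of_eq_succ (fun p hp hpN => ?_) hj hj'
    have hp' := congrFun h ⟨p, by omega⟩
    rwa [Atilde_mulVec_apply n k l hn, Fin.val_mk, cycPred_add_one n hp, Pi.zero_apply,
      sub_eq_zero] at hp'
  · intro h
    funext j
    have := j.isLt
    rw [Atilde_mulVec_apply n k l hn, Pi.zero_apply, h (j + 1) (by omega) (by omega),
      h (cycPred n (j + 1)) (by unfold cycPred; split <;> omega)
        (by unfold cycPred; split <;> omega), sub_self]

lemma eq_zero_of_flux_eq_zero (hk : ∀ i, 1 ≤ i → i ≤ 2*n+1 → 0 < k i)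
    (hl : ∀ i, 1 ≤ i → i ≤ 2*n+1 → 0 < l i) {v : Fin (2*n+2) → ℝ}
    (h : ∀ j, 1 ≤ j → j ≤ 2*n+2 → flux n k l v j = 0) : v = 0 := by
  refine eq_zero_of_entry_eq_zero fun m hm hm' => ?_
  revert hm
  induction hm' using Nat.decreasingInduction with
  | self =>
    intro hm
    have h_top := h _ hm le_rfl
    rw [flux, bwdLabel_two_mul_add_two, zero_mul, sub_zero] at h_top
    exact (mul_eq_zero.1 h_top).resolve_left (fwdLabel_pos n k l hk hl hm le_rfl).ne'
  | of_succ j hj ih =>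
    intro hm
    have h_j := h j hm hj.le
    rw [flux, cycSucc, if_neg hj.ne, ih (by omega), mul_zero, sub_zero] at h_j
    exact (mul_eq_zero.1 h_j).resolve_left (fwdLabel_pos n k l hk hl hm hj.le).ne'

lemma eq_zero_of_Atilde_mulVec_eq_zero (hn : 1 ≤ n) (hk : ∀ i, 1 ≤ i → i ≤ 2*n+1 → 0 < k i)
    (hl : ∀ i, 1 ≤ i → i ≤ 2*n+1 → 0 < l i) {w : Fin (2*n+2) → ℝ}
    (hw : Atilde n k l *ᵥ w = 0) (h : w ⟨n, by omega⟩ = 0) : w = 0 := by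
  have hflux := (Atilde_mulVec_eq_zero_iff n k l hn w).1 hw
  have h_mid : flux n k l w (n + 1) = 0 := by
    rw [flux, bwdLabel_n_add_one, (entry_succ w ⟨n, by omega⟩).trans h]
    ring
  refine eq_zero_of_flux_eq_zero n k l hk hl fun j hj hj' => ?_
  rw [hflux j hj hj', ← hflux (n + 1) (by omega) (by omega), h_mid]

lemma Atilde_ker_eq_smul (hn : 1 ≤ n) (hk : ∀ i, 1 ≤ i → i ≤ 2*n+1 → 0 < k i)
    (hl : ∀ i, 1 ≤ i → i ≤ 2*n+1 → 0 < l i) {ρ v : Fin (2*n+2) → ℝ}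
    (hρ : Atilde n k l *ᵥ ρ = 0) (hρn : ρ ⟨n, by omega⟩ ≠ 0) (hv : Atilde n k l *ᵥ v = 0) :
    v = (v ⟨n, by omega⟩ / ρ ⟨n, by omega⟩) • ρ := by
  rw [← sub_eq_zero]
  refine eq_zero_of_Atilde_mulVec_eq_zero n k l hn hk hl ?_ ?_
  · rw [mulVec_sub, mulVec_smul, hv, hρ, smul_zero, sub_zero]
  · simp [hρn]

end ReactionCycle

section MassAction

variable (n : ℕ) (k l : ℕ → ℝ)

lemma entry_Psi (x : Fin (2*n+4) → ℝ) {m : ℕ} (hm : 1 ≤ m) :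
    entry (Psi n x) m = if m = 1 then X n x 1 * X n x 3 else if m ≤ n + 1 then X n x (2*m+1)
      else if m = n + 2 then X n x 2 * X n x 4
      else if m ≤ 2*n+2 then X n x (2*n+6-2*(m-(n+2))) else 0 := by
  by_cases h : m ≤ 2*n+2
  · obtain ⟨i, rfl⟩ : ∃ i : Fin (2*n+2), m = i + 1 := ⟨⟨m - 1, by omega⟩, by simp; omega⟩
    rw [entry_succ, Psi, if_pos h]
  · rw [entry, dif_neg (by omega), if_neg (by omega), if_neg (by omega), if_neg (by omega),
      if_neg h]

lemma Psi_pos {x : Fin (2*n+4) → ℝ} (hx : ∀ i, 0 < x i) (i : Fin (2*n+2)) : 0 < Psi n x i := by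
  have hX : ∀ m, 1 ≤ m → m ≤ 2*n+4 → 0 < X n x m := fun m => entry_pos hx
  have := i.isLt
  rw [← entry_succ (Psi n x) i, entry_Psi n x (by omega)]
  split_ifs <;> first
    | exact mul_pos (hX _ (by omega) (by omega)) (hX _ (by omega) (by omega))
    | exact hX _ (by omega) (by omega)
    | omega

lemma entry_Rvec (hn : 1 ≤ n) (x : Fin (2*n+4) → ℝ) {a : ℕ} (ha : 1 ≤ a) (ha' : a ≤ 2*n+2) :
    entry (Rvec n k l x) a = flux n k l (Psi n x) a := by
  obtain ⟨i, rfl⟩ : ∃ i : Fin (2*n+2), a = i + 1 := ⟨⟨a - 1, by omega⟩, by simp; omega⟩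
  rw [entry_succ, Rvec, flux, entry_Psi n x ha, entry_Psi n x (by unfold cycSucc; split <;> omega)]
  generalize (i : ℕ) + 1 = a at *
  unfold fwdLabel bwdLabel cycSucc
  rcases (by omega : a = 1 ∨ (2 ≤ a ∧ a ≤ n) ∨ a = n + 1 ∨ a = n + 2
      ∨ (n + 3 ≤ a ∧ a ≤ 2*n+1) ∨ a = 2*n+2) with rfl | h | rfl | rfl | h | rfl <;>
    simp (disch := omega) only [if_pos, if_neg, ↓reduceIte, zero_mul, sub_zero] <;>
    grind

end MassAction

section Stoichiometry

variable (n : ℕ)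

/-- Species `s` is produced by reaction `producer n s` and consumed by reaction `consumer n s`
(species and reactions, i.e. rows and columns of `Γ`, counted from `1`). -/
def producer (s : ℕ) : ℕ :=
  if s = 1 ∨ s = 4 then n + 1 else if s = 2 ∨ s = 3 then 2*n+2
  else if s % 2 = 1 then (s - 3) / 2 else n + 2 + (2*n+4-s) / 2

def consumer (s : ℕ) : ℕ :=
  if s = 1 ∨ s = 3 then 1 else if s = 2 ∨ s = 4 then n + 2
  else if s % 2 = 1 then (s - 1) / 2 else n + 3 + (2*n+4-s) / 2

lemma one_le_producer (s : ℕ) : 1 ≤ producer n s := by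
  unfold producer; split_ifs <;> omega

lemma one_le_consumer (s : ℕ) : 1 ≤ consumer n s := by
  unfold consumer; split_ifs <;> omega

lemma producer_le {s : ℕ} (hs : 1 ≤ s) (hs' : s ≤ 2*n+4) : producer n s ≤ 2*n+2 := by
  unfold producer; split_ifs <;> omega

lemma consumer_le {s : ℕ} (hs : 1 ≤ s) (hs' : s ≤ 2*n+4) : consumer n s ≤ 2*n+2 := by
  unfold consumer; split_ifs <;> omega

lemma Gamma_apply_eq (hn : 1 ≤ n) (r : Fin (2*n+4)) (c : Fin (2*n+2)) :
    Gamma n r c = (if (c : ℕ) + 1 = producer n (r + 1) then 1 else 0)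
      - (if (c : ℕ) + 1 = consumer n (r + 1) then 1 else 0) := by
  have hr := r.isLt
  have hc := c.isLt
  simp only [Gamma, of_apply]
  generalize hs : (r : ℕ) + 1 = s at *
  generalize ha : (c : ℕ) + 1 = a at *
  have hE : ∀ m, E n m r = if s = m then 1 else 0 := fun m => by simp [E, hs]
  have hP : a = producer n s ↔ if a = 1 then s = 5 else if a ≤ n then s = 2*(a-1)+5
      else if a = n+1 then s = 1 ∨ s = 4 else if a = n+2 then s = 2*n+4
      else if a ≤ 2*n+1 then s = 2*n+4-2*(a-(n+2)) else s = 2 ∨ s = 3 := by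
    unfold producer; split_ifs <;> omega
  have hQ : a = consumer n s ↔ if a = 1 then s = 1 ∨ s = 3 else if a ≤ n then s = 2*(a-1)+3
      else if a = n+1 then s = 2*n+3 else if a = n+2 then s = 2 ∨ s = 4
      else if a ≤ 2*n+1 then s = 2*n+6-2*(a-(n+2)) else s = 6 := by
    unfold consumer; split_ifs <;> omega
  simp only [hP, hQ]
  split_ifs <;> simp only [Pi.sub_apply, Pi.add_apply, hE] <;> split_ifs <;>
    first | omega | norm_num

lemma Gamma_mulVec_apply (hn : 1 ≤ n) (R : Fin (2*n+2) → ℝ) (r : Fin (2*n+4)) :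
    (Gamma n *ᵥ R) r = entry R (producer n (r + 1)) - entry R (consumer n (r + 1)) := by
  simp only [mulVec, dotProduct, Gamma_apply_eq n hn, sub_mul, sum_sub_distrib,
    sum_ite_mul_eq_entry _ _ (one_le_producer n _), sum_ite_mul_eq_entry _ _ (one_le_consumer n _),
    one_mul]

lemma exists_producer_consumer {p : ℕ} (hp : 1 ≤ p) (hp' : p ≤ 2*n+1) :
    ∃ s, 1 ≤ s ∧ s ≤ 2*n+4 ∧ producer n s = p ∧ consumer n s = p + 1 := by
  rcases (by omega : p ≤ n ∨ p = n + 1 ∨ n + 2 ≤ p) with h | h | h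
  · refine ⟨2*p+3, by omega, by omega, ?_, ?_⟩
    · unfold producer; split_ifs <;> omega
    · unfold consumer; split_ifs <;> omega
  · refine ⟨4, by omega, by omega, ?_, ?_⟩
    · unfold producer; split_ifs <;> omega
    · unfold consumer; split_ifs <;> omega
  · refine ⟨4*n+8-2*p, by omega, by omega, ?_, ?_⟩
    · unfold producer; split_ifs <;> omega
    · unfold consumer; split_ifs <;> omega

lemma Gamma_mulVec_eq_zero_iff (hn : 1 ≤ n) (R : Fin (2*n+2) → ℝ) :
    Gamma n *ᵥ R = 0 ↔ ∀ j, 1 ≤ j → j ≤ 2*n+2 → entry R j = entry R 1 := by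
  constructor
  · intro h j hj hj'
    refine eq_one_of_eq_succ (fun p hp hpN => ?_) hj hj'
    obtain ⟨s, hs, hs', hP, hQ⟩ := exists_producer_consumer n hp (by omega)
    have hrow := congrFun h ⟨s - 1, by omega⟩
    rwa [Gamma_mulVec_apply n hn, Fin.val_mk, Nat.sub_add_cancel hs, hP, hQ, Pi.zero_apply,
      sub_eq_zero] at hrow
  · intro h
    funext r
    have := r.isLt
    rw [Gamma_mulVec_apply n hn, Pi.zero_apply,
      h _ (one_le_producer n _) (producer_le n (by omega) (by omega)),
      h _ (one_le_consumer n _) (consumer_le n (by omega) (by omega)), sub_self]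

end Stoichiometry

/-- A positive `x` is a steady state of the processive `n`-site system if and only if
`Ψ(x) = α·ρ` for some `α > 0`, where `ρ` is a positive vector spanning `ker Ã_κᵗ`. -/
theorem steady_state_iff_scalar_multiple (n : ℕ) (hn : 1 ≤ n) (k l : ℕ → ℝ)
    (hk : ∀ i, 1 ≤ i → i ≤ 2*n+1 → 0 < k i)
    (hl : ∀ i, 1 ≤ i → i ≤ 2*n+1 → 0 < l i)
    (ρ : Fin (2*n+2) → ℝ) (hρ : ∀ i, 0 < ρ i)
    (hker : (Atilde n k l).mulVec ρ = 0)
    (x : Fin (2*n+4) → ℝ) (hx : ∀ i, 0 < x i) :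
    (Gamma n).mulVec (Rvec n k l x) = 0 ↔ ∃ α : ℝ, 0 < α ∧ Psi n x = α • ρ := by
  have h_steady : Gamma n *ᵥ Rvec n k l x = 0 ↔ Atilde n k l *ᵥ Psi n x = 0 := by
    rw [Gamma_mulVec_eq_zero_iff n hn, Atilde_mulVec_eq_zero_iff n k l hn]
    refine forall₂_congr fun j hj => forall_congr' fun hj' => ?_
    rw [entry_Rvec n k l hn x hj hj', entry_Rvec n k l hn x le_rfl (by omega)]
  rw [h_steady]
  constructor
  · intro hΨ
    exact ⟨_, div_pos (Psi_pos n hx _) (hρ _), Atilde_ker_eq_smul n k l hn hk hl hker (hρ _).ne' hΨ⟩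
  · rintro ⟨α, -, hΨ⟩
    rw [hΨ, mulVec_smul, hker, smul_zero]

end
end
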